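/- With A, A′, L, L′ as follows: A is the n×n symmetric positive definite tridiagonal matrix with A_{11} = 1, A_{ii} = 1 + 1/i² for i ≥ 2, A_{i+1,i} = A_{i,i+1} = 1/i; A′ = A + e₁e₁ᵀ; and L, L′ are the respective lower bidiagonal Cholesky factors with positive diagonals. Then the subdiagonal entries satisfy L_{i,i−1} = 1 for all i ≥ 2, while L′_{i,i−1} = (1/(i−1))/√(d_{i−1}) → 0 as i → ∞ (where d_i = (L′_{ii})²); hence |L′_{i,i−1} − L_{i,i−1}| → 1 as i → ∞. -/

import Mathlib

/-!
For a lower bidiagonal `L` with diagonal `ℓᵢ` and subdiagonal `sᵢ`, the identity `A = L Lᵀ` reads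
`s_{i+1} ℓᵢ = A_{i+1,i}` and `ℓ_{i+1}² + s_{i+1}² = A_{i+1,i+1}`. For our matrices the scaled pivots
`fⱼ = j² ℓⱼ²` (1-based) therefore obey `f₁ = A₁₁`, `f_{j+1} = (j+1)² + 1 - (j+1)²/fⱼ`, and
`s_{j+1} = 1/√fⱼ`. With `A₁₁ = 1` the recursion is constantly `1`, so every `sᵢ = 1`; with
`A'₁₁ = 2` an induction gives `fⱼ ≥ j + 1`, so `s'ᵢ → 0`.
-/

open Matrix

/-- The `n × n` tridiagonal SPD matrix with `A_{11} = 1`, `A_{ii} = 1 + 1/i²` for `i ≥ 2`,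
and `A_{i+1,i} = A_{i,i+1} = 1/i` (1-based indexing). -/
noncomputable def triA (n : ℕ) : Matrix (Fin n) (Fin n) ℝ :=
  Matrix.of fun i j =>
    if i = j then (if i.val = 0 then 1 else 1 + 1 / ((i.val : ℝ) + 1) ^ 2)
    else if i.val = j.val + 1 then 1 / ((j.val : ℝ) + 1)
    else if j.val = i.val + 1 then 1 / ((i.val : ℝ) + 1)
    else 0

/-- `A' = A + e₁e₁ᵀ`: the rank-one perturbation of `triA n` in the `(1,1)` entry. -/
noncomputable def triA' (n : ℕ) : Matrix (Fin n) (Fin n) ℝ :=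
  triA n + Matrix.of fun i j => if i.val = 0 ∧ j.val = 0 then (1 : ℝ) else 0

open Filter

def IsLowerBidiagonal {R : Type*} [Zero R] {n : ℕ} (L : Matrix (Fin n) (Fin n) R) : Prop :=
  ∀ i j : Fin n, i.val ≠ j.val → i.val ≠ j.val + 1 → L i j = 0

namespace IsLowerBidiagonal

variable {R : Type*} [Semiring R] {n : ℕ} {L : Matrix (Fin n) (Fin n) R}

theorem mul_transpose_apply_of_val_eq_succ (hL : IsLowerBidiagonal L) {i j : Fin n}
    (hij : i.val = j.val + 1) : (L * Lᵀ) i j = L i j * L j j := by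
  rw [mul_apply, Fintype.sum_eq_single j]
  · rfl
  intro k hk
  by_cases hjk : j.val = k.val + 1
  · rw [hL i k (by omega) (by omega), zero_mul]
  · rw [transpose_apply, hL j k (fun h => hk (Fin.ext h.symm)) hjk, mul_zero]

theorem mul_transpose_apply_self_of_val_eq_zero (hL : IsLowerBidiagonal L) {i : Fin n}
    (hi : i.val = 0) : (L * Lᵀ) i i = L i i ^ 2 := by
  rw [mul_apply, Fintype.sum_eq_single i, sq]
  · rfl
  intro k hk
  rw [hL i k (fun h => hk (Fin.ext h.symm)) (by omega), zero_mul]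

theorem mul_transpose_apply_self_of_val_eq_succ (hL : IsLowerBidiagonal L) {i j : Fin n}
    (hij : i.val = j.val + 1) : (L * Lᵀ) i i = L i i ^ 2 + L i j ^ 2 := by
  rw [mul_apply, Fintype.sum_eq_add i j (fun h => by rw [h] at hij; omega), sq, sq]
  · rfl
  rintro k ⟨hki, hkj⟩
  rw [hL i k (fun h => hki (Fin.ext h.symm)) (fun h => hkj (Fin.ext (by omega))), zero_mul]

end IsLowerBidiagonal

section Entries

variable {n : ℕ} {i j : Fin n}

theorem triA_apply_self_of_val_eq_zero (hi : i.val = 0) : triA n i i = 1 := by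
  simp [triA, hi]

theorem triA_apply_self_of_val_eq_succ (hij : i.val = j.val + 1) :
    triA n i i = 1 + 1 / ((j.val : ℝ) + 2) ^ 2 := by
  simp only [triA, of_apply, if_true, hij, Nat.add_one_ne_zero, if_false]
  push_cast
  ring

theorem triA_apply_of_val_eq_succ (hij : i.val = j.val + 1) :
    triA n i j = 1 / ((j.val : ℝ) + 1) := by
  have hne : i ≠ j := fun h => by rw [h] at hij; omega
  simp [triA, hne, hij]

theorem triA'_apply_self_of_val_eq_zero (hi : i.val = 0) : triA' n i i = 2 := by
  simp [triA', triA_apply_self_of_val_eq_zero hi, hi]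
  norm_num

theorem triA'_apply_of_val_ne_zero {k : Fin n} (hi : i.val ≠ 0) :
    triA' n i k = triA n i k := by
  simp [triA', hi]

end Entries

/-- `scaledPivot a j = (j+1)² L_{jj}²` (0-based `j`) for the Cholesky factor `L` of `triA` with its
`(1,1)` entry replaced by `a`. -/
noncomputable def scaledPivot (a : ℝ) : ℕ → ℝ
  | 0 => a
  | j + 1 => ((j : ℝ) + 2) ^ 2 + 1 - ((j : ℝ) + 2) ^ 2 / scaledPivot a j

theorem scaledPivot_one (j : ℕ) : scaledPivot 1 j = 1 := by
  induction j with
  | zero => rfl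
  | succ j ih => simp [scaledPivot, ih]

theorem le_scaledPivot {a : ℝ} (ha : 2 ≤ a) (j : ℕ) : (j : ℝ) + 2 ≤ scaledPivot a j := by
  induction j with
  | zero => simpa [scaledPivot] using ha
  | succ j ih =>
    have hj : (0 : ℝ) ≤ j := j.cast_nonneg
    have hdiv : ((j : ℝ) + 2) ^ 2 / scaledPivot a j ≤ (j : ℝ) + 2 := by
      rw [div_le_iff₀ (by linarith)]
      nlinarith
    simp only [scaledPivot]
    push_cast
    nlinarith

theorem tendsto_scaledPivot {a : ℝ} (ha : 2 ≤ a) : Tendsto (scaledPivot a) atTop atTop :=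
  tendsto_atTop_mono (fun j => by linarith [le_scaledPivot ha j]) tendsto_natCast_atTop_atTop

namespace IsLowerBidiagonal

variable {n : ℕ} {a : ℝ} {L : Matrix (Fin n) (Fin n) ℝ}

theorem sq_mul_sq_apply_self_eq_scaledPivot (hL : IsLowerBidiagonal L)
    (h00 : ∀ i : Fin n, i.val = 0 → (L * Lᵀ) i i = a)
    (hsub : ∀ i j : Fin n, i.val = j.val + 1 → (L * Lᵀ) i j = 1 / ((j.val : ℝ) + 1))
    (hdiag : ∀ i j : Fin n, i.val = j.val + 1 → (L * Lᵀ) i i = 1 + 1 / ((j.val : ℝ) + 2) ^ 2)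
    (j : Fin n) : ((j.val : ℝ) + 1) ^ 2 * L j j ^ 2 = scaledPivot a j.val := by
  suffices ∀ p : ℕ, ∀ j : Fin n, j.val = p →
      ((p : ℝ) + 1) ^ 2 * L j j ^ 2 = scaledPivot a p from this j.val j rfl
  intro p
  induction p with
  | zero =>
    intro j hj
    rw [Nat.cast_zero, zero_add, one_pow, one_mul, ← hL.mul_transpose_apply_self_of_val_eq_zero hj,
      h00 j hj, scaledPivot]
  | succ p ih =>
    intro i hi
    obtain ⟨j, rfl⟩ : ∃ j : Fin n, j.val = p := ⟨⟨p, by omega⟩, rfl⟩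
    have hprod : L i j * L j j * ((j.val : ℝ) + 1) = 1 := by
      rw [← hL.mul_transpose_apply_of_val_eq_succ hi, hsub i j hi]
      field_simp
    have hsum : L i i ^ 2 + L i j ^ 2 = 1 + 1 / ((j.val : ℝ) + 2) ^ 2 := by
      rw [← hL.mul_transpose_apply_self_of_val_eq_succ hi, hdiag i j hi]
    have hpivot : ((j.val : ℝ) + 1) ^ 2 * L j j ^ 2 * L i j ^ 2 = 1 := by
      linear_combination (L i j * L j j * ((j.val : ℝ) + 1) + 1) * hprod
    have hquot : ((j.val : ℝ) + 2) ^ 2 / (((j.val : ℝ) + 1) ^ 2 * L j j ^ 2)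
        = ((j.val : ℝ) + 2) ^ 2 * L i j ^ 2 := by
      rw [div_eq_iff (left_ne_zero_of_mul_eq_one hpivot)]
      linear_combination (-((j.val : ℝ) + 2) ^ 2) * hpivot
    rw [scaledPivot, ← ih j rfl, hquot]
    field_simp at hsum
    push_cast
    linear_combination hsum

theorem apply_eq_inv_sqrt_scaledPivot (hL : IsLowerBidiagonal L) (hpos : ∀ i, 0 < L i i)
    (h00 : ∀ i : Fin n, i.val = 0 → (L * Lᵀ) i i = a)
    (hsub : ∀ i j : Fin n, i.val = j.val + 1 → (L * Lᵀ) i j = 1 / ((j.val : ℝ) + 1))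
    (hdiag : ∀ i j : Fin n, i.val = j.val + 1 → (L * Lᵀ) i i = 1 + 1 / ((j.val : ℝ) + 2) ^ 2)
    {i j : Fin n} (hij : i.val = j.val + 1) : L i j = (√(scaledPivot a j.val))⁻¹ := by
  rw [← hL.sq_mul_sq_apply_self_eq_scaledPivot h00 hsub hdiag, ← mul_pow,
    Real.sqrt_sq (by have := hpos j; positivity)]
  refine eq_inv_of_mul_eq_one_left ?_
  rw [mul_left_comm, ← hL.mul_transpose_apply_of_val_eq_succ hij, hsub i j hij]
  field_simp

variable {i j : Fin n}

theorem apply_eq_one_of_triA_eq (hL : IsLowerBidiagonal L) (hpos : ∀ i, 0 < L i i)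
    (hA : triA n = L * Lᵀ) (hij : i.val = j.val + 1) : L i j = 1 := by
  rw [hL.apply_eq_inv_sqrt_scaledPivot hpos (a := 1)
    (fun i hi => hA ▸ triA_apply_self_of_val_eq_zero hi)
    (fun i j hij => hA ▸ triA_apply_of_val_eq_succ hij)
    (fun i j hij => hA ▸ triA_apply_self_of_val_eq_succ hij) hij,
    scaledPivot_one, Real.sqrt_one, inv_one]

theorem apply_eq_inv_sqrt_scaledPivot_two_of_triA'_eq (hL : IsLowerBidiagonal L)
    (hpos : ∀ i, 0 < L i i) (hA : triA' n = L * Lᵀ) (hij : i.val = j.val + 1) :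
    L i j = (√(scaledPivot 2 j.val))⁻¹ :=
  hL.apply_eq_inv_sqrt_scaledPivot hpos
    (fun i hi => hA ▸ triA'_apply_self_of_val_eq_zero hi)
    (fun i j hij => hA ▸
      (triA'_apply_of_val_ne_zero (by omega)).trans (triA_apply_of_val_eq_succ hij))
    (fun i j hij => hA ▸
      (triA'_apply_of_val_ne_zero (by omega)).trans (triA_apply_self_of_val_eq_succ hij))
    hij

end IsLowerBidiagonal

/-- With `L`, `L'` the lower bidiagonal Cholesky factors (with positive
diagonals) of `A = triA n` and `A' = triA' n = A + e₁e₁ᵀ`: the subdiagonal entries satisfy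
`L_{i,i-1} = 1` for all `i ≥ 2` and `L'_{i,i-1} = (1/(i-1))/√(d_{i-1})` where
`d_i = (L'_{ii})²`; moreover the subdiagonal entries of `L'` do not depend on `n` and,
as a sequence `c` in the row index, `L'_{i,i-1} = c_i → 0` as `i → ∞`, hence
`|L'_{i,i-1} - L_{i,i-1}| → 1` as `i → ∞`. -/
theorem stmt_6 :
    (∀ (n : ℕ) (L : Matrix (Fin n) (Fin n) ℝ),
      (∀ i j : Fin n, i.val ≠ j.val → i.val ≠ j.val + 1 → L i j = 0) →
      (∀ i : Fin n, 0 < L i i) → triA n = L * Lᵀ →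
      ∀ i j : Fin n, i.val = j.val + 1 → L i j = 1) ∧
    (∀ (n : ℕ) (L' : Matrix (Fin n) (Fin n) ℝ),
      (∀ i j : Fin n, i.val ≠ j.val → i.val ≠ j.val + 1 → L' i j = 0) →
      (∀ i : Fin n, 0 < L' i i) → triA' n = L' * L'ᵀ →
      ∀ i j : Fin n, i.val = j.val + 1 →
        L' i j = (1 / ((j.val : ℝ) + 1)) / Real.sqrt ((L' j j) ^ 2)) ∧
    (∃ c : ℕ → ℝ,
      (∀ (n : ℕ) (L' : Matrix (Fin n) (Fin n) ℝ),
        (∀ i j : Fin n, i.val ≠ j.val → i.val ≠ j.val + 1 → L' i j = 0) →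
        (∀ i : Fin n, 0 < L' i i) → triA' n = L' * L'ᵀ →
        ∀ i j : Fin n, i.val = j.val + 1 → L' i j = c i.val) ∧
      Filter.Tendsto c Filter.atTop (nhds 0) ∧
      Filter.Tendsto (fun k => |c k - 1|) Filter.atTop (nhds 1)) := by
  have hc : Tendsto (fun k => (√(scaledPivot 2 (k - 1)))⁻¹) atTop (nhds 0) :=
    tendsto_inv_atTop_zero.comp <| Real.tendsto_sqrt_atTop.comp <|
      (tendsto_scaledPivot le_rfl).comp (tendsto_sub_atTop_nat 1)
  refine ⟨fun n L hL hpos hA i j hij => IsLowerBidiagonal.apply_eq_one_of_triA_eq hL hpos hA hij,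
    fun n L hL hpos hA i j hij => ?_, _, fun n L hL hpos hA i j hij => ?_, hc,
    by simpa using (hc.sub_const 1).abs⟩
  · rw [Real.sqrt_sq (hpos j).le, eq_div_iff (hpos j).ne',
      ← IsLowerBidiagonal.mul_transpose_apply_of_val_eq_succ hL hij, ← hA,
      triA'_apply_of_val_ne_zero (by omega), triA_apply_of_val_eq_succ hij]
  · rw [IsLowerBidiagonal.apply_eq_inv_sqrt_scaledPivot_two_of_triA'_eq hL hpos hA hij, hij, Nat.add_sub_cancel]
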